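/- arXiv:1103.1417 — 7 statements merged into one kernel-verified Lean document; each statement's English description precedes it below -/
import Mathlib

section
/- Let a, b ∈ ℝ^m be unit vectors. Then the operator norm of a aᵀ − b bᵀ equals √(1 − (aᵀb)²). -/
/-!
Write `t = ⟪a, b⟫`. The operator `a aᵀ - b bᵀ` sends `x` to `⟪a, x⟫ a - ⟪b, x⟫ b`, whose squared
norm is `⟪a, x⟫² + ⟪b, x⟫² - 2t⟪a, x⟫⟪b, x⟫`. Cauchy–Schwarz applied to the components of `x` and
of `b` orthogonal to `a` (the Gram determinant of `x, a, b` is nonnegative) bounds this by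
`(1 - t²)‖x‖²`. The bound is attained at `x = a + b`, which is sent to `(1 + t)(a - b)`.
-/

noncomputable def opNorm {m n : ℕ} (A : Matrix (Fin m) (Fin n) ℝ) : ℝ :=
  ‖LinearMap.toContinuousLinearMap (Matrix.toEuclideanLin (𝕜 := ℝ) A)‖

open InnerProductSpace
open scoped RealInnerProductSpace

section

variable {E : Type*} [SeminormedAddCommGroup E] [InnerProductSpace ℝ E]

theorem inner_sq_add_inner_sq_sub_le {a : E} (b x : E) (ha : ‖a‖ = 1) :
    ⟪a, x⟫ ^ 2 * ‖b‖ ^ 2 + ⟪b, x⟫ ^ 2 - 2 * ⟪a, b⟫ * ⟪a, x⟫ * ⟪b, x⟫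
      ≤ (‖b‖ ^ 2 - ⟪a, b⟫ ^ 2) * ‖x‖ ^ 2 := by
  have h := real_inner_mul_inner_self_le (x - ⟪a, x⟫ • a) (b - ⟪a, b⟫ • a)
  simp only [inner_sub_left, inner_sub_right, real_inner_smul_left, real_inner_smul_right,
    real_inner_self_eq_norm_sq, norm_smul, Real.norm_eq_abs, mul_pow, sq_abs, ha,
    real_inner_comm b x, real_inner_comm a x, real_inner_comm a b] at h
  linarith

variable {a b : E}

theorem norm_sq_rankOne_sub_rankOne_apply (ha : ‖a‖ = 1) (hb : ‖b‖ = 1) (x : E) :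
    ‖(rankOne ℝ a a - rankOne ℝ b b) x‖ ^ 2
      = ⟪a, x⟫ ^ 2 + ⟪b, x⟫ ^ 2 - 2 * ⟪a, b⟫ * ⟪a, x⟫ * ⟪b, x⟫ := by
  rw [sub_apply, rankOne_apply, rankOne_apply, norm_sub_sq_real, norm_smul, norm_smul,
    real_inner_smul_left, real_inner_smul_right, ha, hb]
  simp only [Real.norm_eq_abs, mul_pow, sq_abs]
  ring

theorem norm_rankOne_sub_rankOne_le (ha : ‖a‖ = 1) (hb : ‖b‖ = 1) :
    ‖rankOne ℝ a a - rankOne ℝ b b‖ ≤ √(1 - ⟪a, b⟫ ^ 2) := by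
  have hgap : 0 ≤ 1 - ⟪a, b⟫ ^ 2 := by
    have := real_inner_mul_inner_self_le a b
    rw [real_inner_self_eq_norm_sq, real_inner_self_eq_norm_sq, ha, hb] at this
    nlinarith
  refine ContinuousLinearMap.opNorm_le_bound _ (Real.sqrt_nonneg _) fun x => ?_
  rw [← Real.sqrt_sq (norm_nonneg _), ← Real.sqrt_sq (norm_nonneg x), ← Real.sqrt_mul hgap]
  refine Real.sqrt_le_sqrt ?_
  rw [norm_sq_rankOne_sub_rankOne_apply ha hb]
  simpa [hb] using inner_sq_add_inner_sq_sub_le b x ha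

theorem le_norm_rankOne_sub_rankOne (ha : ‖a‖ = 1) (hb : ‖b‖ = 1) :
    √(1 - ⟪a, b⟫ ^ 2) ≤ ‖rankOne ℝ a a - rankOne ℝ b b‖ := by
  have hsum : ‖a + b‖ ^ 2 = 2 * (1 + ⟪a, b⟫) := by rw [norm_add_sq_real, ha, hb]; ring
  rcases eq_or_ne ‖a + b‖ 0 with hzero | hpos
  · have : ⟪a, b⟫ = -1 := by rw [hzero] at hsum; linarith
    simp [this]
  have hsq : ‖(rankOne ℝ a a - rankOne ℝ b b) (a + b)‖ ^ 2
      = (1 - ⟪a, b⟫ ^ 2) * ‖a + b‖ ^ 2 := by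
    rw [norm_sq_rankOne_sub_rankOne_apply ha hb, hsum, inner_add_right, inner_add_right,
      real_inner_self_eq_norm_sq, real_inner_self_eq_norm_sq, ha, hb, real_inner_comm b a]
    ring
  have hattained : ‖(rankOne ℝ a a - rankOne ℝ b b) (a + b)‖ = √(1 - ⟪a, b⟫ ^ 2) * ‖a + b‖ := by
    rw [← Real.sqrt_sq (norm_nonneg _), hsq, Real.sqrt_mul' _ (sq_nonneg _),
      Real.sqrt_sq (norm_nonneg _)]
  calc √(1 - ⟪a, b⟫ ^ 2) = ‖(rankOne ℝ a a - rankOne ℝ b b) (a + b)‖ / ‖a + b‖ := by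
        rw [hattained, mul_div_cancel_right₀ _ hpos]
    _ ≤ ‖rankOne ℝ a a - rankOne ℝ b b‖ := ContinuousLinearMap.ratio_le_opNorm _ _

theorem norm_rankOne_sub_rankOne (ha : ‖a‖ = 1) (hb : ‖b‖ = 1) :
    ‖rankOne ℝ a a - rankOne ℝ b b‖ = √(1 - ⟪a, b⟫ ^ 2) :=
  (norm_rankOne_sub_rankOne_le ha hb).antisymm (le_norm_rankOne_sub_rankOne ha hb)

end

theorem EuclideanSpace.norm_toLp_eq_one {ι : Type*} [Fintype ι] {a : ι → ℝ}
    (ha : ∑ i, a i ^ 2 = 1) : ‖WithLp.toLp 2 a‖ = 1 := by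
  simp [EuclideanSpace.norm_eq, ha]

theorem outer_product_opNorm {m : ℕ} (a b : Fin m → ℝ)
    (ha : ∑ i, a i ^ 2 = 1) (hb : ∑ i, b i ^ 2 = 1) :
    opNorm (Matrix.vecMulVec a a - Matrix.vecMulVec b b)
      = Real.sqrt (1 - (∑ i, a i * b i) ^ 2) := by
  set a' : EuclideanSpace ℝ (Fin m) := WithLp.toLp 2 a
  set b' : EuclideanSpace ℝ (Fin m) := WithLp.toLp 2 b
  have hmatrix : LinearMap.toContinuousLinearMap
      (Matrix.toEuclideanLin (Matrix.vecMulVec a a - Matrix.vecMulVec b b))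
      = rankOne ℝ a' a' - rankOne ℝ b' b' := by
    rw [LinearMap.toContinuousLinearMap_eq_iff_eq_toLinearMap, ← LinearEquiv.eq_symm_apply]
    simp [a', b', symm_toEuclideanLin_rankOne]
  have hinner : ⟪a', b'⟫ = ∑ i, a i * b i := by simp [a', b', PiLp.inner_apply, mul_comm]
  rw [opNorm, hmatrix, norm_rankOne_sub_rankOne (EuclideanSpace.norm_toLp_eq_one ha)
    (EuclideanSpace.norm_toLp_eq_one hb), hinner]
end

section
/- Let A and Ã be p × p real symmetric matrices. Let λ₁ ≥ ⋯ ≥ λ_{p−1} > λ_p be the eigenvalues of A, and let v, ṽ be unit eigenvectors of A and Ã respectively corresponding to their smallest eigenvalues. Then 1 − (vᵀṽ)² ≤ 4‖A − Ã‖₂ / (λ_{p−1} − λ_p). -/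
open scoped RealInnerProductSpace

section Eigenbasis

variable {ι E : Type*} [Fintype ι] [NormedAddCommGroup E] [InnerProductSpace ℝ E]
  {T : E →ₗ[ℝ] E} {b : OrthonormalBasis ι ℝ E} {d : ι → ℝ}

theorem inner_map_self_eq_sum_of_eigenbasis (hb : ∀ i, T (b i) = d i • b i) (x : E) :
    ⟪T x, x⟫ = ∑ i, d i * ⟪b i, x⟫ ^ 2 := by
  nth_rw 1 [← b.sum_repr' x]
  rw [map_sum, sum_inner]
  congr 1 with i
  rw [map_smul, hb, real_inner_smul_left, real_inner_smul_left]
  ring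

theorem mul_norm_sq_le_inner_map_self_of_eigenbasis (hb : ∀ i, T (b i) = d i • b i) {μ : ℝ}
    (hμ : ∀ i, μ ≤ d i) (x : E) : μ * ‖x‖ ^ 2 ≤ ⟪T x, x⟫ := by
  rw [← b.sum_sq_inner_right, Finset.mul_sum, inner_map_self_eq_sum_of_eigenbasis hb]
  gcongr with i
  exact hμ i

theorem inner_map_self_ge_of_eigenbasis (hb : ∀ i, T (b i) = d i • b i) {i₀ : ι} {m : ℝ}
    (hgap : ∀ i ≠ i₀, m ≤ d i) (x : E) :
    d i₀ * ⟪b i₀, x⟫ ^ 2 + m * (‖x‖ ^ 2 - ⟪b i₀, x⟫ ^ 2) ≤ ⟪T x, x⟫ := by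
  classical
  rw [← b.sum_sq_inner_right, inner_map_self_eq_sum_of_eigenbasis hb,
    ← Finset.add_sum_erase _ _ (Finset.mem_univ i₀),
    ← Finset.add_sum_erase _ _ (Finset.mem_univ i₀), add_sub_cancel_left, Finset.mul_sum]
  gcongr with i hi
  exact hgap i (Finset.ne_of_mem_erase hi)

theorem inner_smul_eq_of_eigenbasis (hT : T.IsSymmetric) (hb : ∀ i, T (b i) = d i • b i)
    {i₀ : ι} (hsimple : ∀ i ≠ i₀, d i ≠ d i₀) {v : E} (hv : T v = d i₀ • v) :
    ⟪b i₀, v⟫ • b i₀ = v := by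
  conv_rhs => rw [← b.sum_repr' v]
  rw [Finset.sum_eq_single_of_mem i₀ (Finset.mem_univ _)]
  intro i _ hi
  have h := hT (b i) v
  rw [hb, hv, real_inner_smul_left, real_inner_smul_right] at h
  have : (d i - d i₀) * ⟪b i, v⟫ = 0 := by linarith
  simp [(mul_eq_zero.mp this).resolve_left (sub_ne_zero.mpr (hsimple i hi))]

theorem abs_inner_map_self_le [FiniteDimensional ℝ E] (f : E →ₗ[ℝ] E) (x : E) :
    |⟪f x, x⟫| ≤ ‖LinearMap.toContinuousLinearMap f‖ * ‖x‖ ^ 2 :=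
  calc |⟪f x, x⟫| ≤ ‖f x‖ * ‖x‖ := abs_real_inner_le_norm _ _
    _ ≤ ‖LinearMap.toContinuousLinearMap f‖ * ‖x‖ * ‖x‖ := by
      gcongr; exact (LinearMap.toContinuousLinearMap f).le_opNorm x
    _ = _ := by ring

theorem gap_mul_one_sub_inner_sq_le_two_mul_norm_sub [FiniteDimensional ℝ E] {S : E →ₗ[ℝ] E}
    (hT : T.IsSymmetric) (hb : ∀ i, T (b i) = d i • b i) {i₀ : ι} {m μ : ℝ}
    (hgap : ∀ i ≠ i₀, m ≤ d i) (hlt : d i₀ < m) (hS : ∀ x, μ * ‖x‖ ^ 2 ≤ ⟪S x, x⟫)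
    {v w : E} (hv1 : ‖v‖ = 1) (hw1 : ‖w‖ = 1) (hv : T v = d i₀ • v) (hw : S w = μ • w) :
    (m - d i₀) * (1 - ⟪v, w⟫ ^ 2) ≤ 2 * ‖LinearMap.toContinuousLinearMap (T - S)‖ := by
  have hpert : ∀ x, ‖x‖ = 1 →
      |⟪T x, x⟫ - ⟪S x, x⟫| ≤ ‖LinearMap.toContinuousLinearMap (T - S)‖ := fun x hx => by
    simpa [inner_sub_left, hx] using abs_inner_map_self_le (T - S) x
  have hv_span := inner_smul_eq_of_eigenbasis hT hb
    (fun i hi => (hlt.trans_le (hgap i hi)).ne') hv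
  have hc : ⟪v, w⟫ ^ 2 = ⟪b i₀, w⟫ ^ 2 := by
    have hunit : ⟪b i₀, v⟫ ^ 2 = 1 := by
      rw [← hv_span, norm_smul, b.orthonormal.1 i₀, mul_one, Real.norm_eq_abs] at hv1
      rw [← sq_abs, hv1, one_pow]
    rw [← hv_span, real_inner_smul_left, mul_pow, hunit, one_mul]
  have hTv : ⟪T v, v⟫ = d i₀ := by
    rw [hv, real_inner_smul_left, real_inner_self_eq_norm_sq, hv1, one_pow, mul_one]
  have hSw : ⟪S w, w⟫ = μ := by
    rw [hw, real_inner_smul_left, real_inner_self_eq_norm_sq, hw1, one_pow, mul_one]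
  have hSv := hS v
  have hTw := inner_map_self_ge_of_eigenbasis hb hgap w
  rw [hv1] at hSv
  rw [hw1, ← hc] at hTw
  have := abs_le.mp (hpert v hv1)
  have := abs_le.mp (hpert w hw1)
  linarith

end Eigenbasis

theorem Matrix.toEuclideanLin_toLp_eq_smul {n : Type*} [Fintype n] [DecidableEq n]
    {M : Matrix n n ℝ} {x : n → ℝ} {c : ℝ} (h : M.mulVec x = c • x) :
    Matrix.toEuclideanLin M (WithLp.toLp 2 x) = c • WithLp.toLp 2 x :=
  congrArg (WithLp.toLp 2) h

/-- Remark 6.2: eigenvector perturbation bound for the smallest eigenvalue. -/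
theorem eigenvector_perturbation {p : ℕ} (hp : 2 ≤ p)
    (A At : Matrix (Fin p) (Fin p) ℝ)
    (hA : A.IsHermitian) (hAt : At.IsHermitian)
    (lam : Fin p → ℝ) (hmono : Antitone lam)
    (σ : Fin p ≃ Fin p) (hlam : lam = hA.eigenvalues ∘ σ)
    (hgap : lam ⟨p - 1, by omega⟩ < lam ⟨p - 2, by omega⟩)
    (v vt : Fin p → ℝ)
    (hv : ∑ i, v i ^ 2 = 1) (hvt : ∑ i, vt i ^ 2 = 1)
    (hev : A.mulVec v = lam ⟨p - 1, by omega⟩ • v)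
    (μt : ℝ)
    (hμt : IsLeast {x | ∃ i, hAt.eigenvalues i = x} μt)
    (hevt : At.mulVec vt = μt • vt) :
    1 - (∑ i, v i * vt i) ^ 2
      ≤ 4 * opNorm (A - At) / (lam ⟨p - 2, by omega⟩ - lam ⟨p - 1, by omega⟩) := by
  have hlast : lam ⟨p - 1, by omega⟩ = hA.eigenvalues (σ ⟨p - 1, by omega⟩) := congrFun hlam _
  have hrest : ∀ i ≠ σ ⟨p - 1, by omega⟩, lam ⟨p - 2, by omega⟩ ≤ hA.eigenvalues i := by
    intro i hi
    obtain ⟨j, rfl⟩ := σ.surjective i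
    rw [← Function.comp_apply (f := hA.eigenvalues), ← hlam]
    have : (j : ℕ) ≠ p - 1 := fun h => hi (congrArg σ (Fin.ext h))
    exact hmono (Fin.le_def.mpr (show (j : ℕ) ≤ p - 2 by omega))
  have hunit : ∀ x : Fin p → ℝ, ∑ i, x i ^ 2 = 1 → ‖WithLp.toLp 2 x‖ = 1 := fun x hx => by
    simp [EuclideanSpace.norm_eq, hx]
  have hbound := gap_mul_one_sub_inner_sq_le_two_mul_norm_sub (b := hA.eigenvectorBasis)
    (Matrix.isSymmetric_toEuclideanLin_iff.mpr hA)
    (fun i => Matrix.toEuclideanLin_toLp_eq_smul (hA.mulVec_eigenvectorBasis i))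
    hrest (hlast ▸ hgap)
    (mul_norm_sq_le_inner_map_self_of_eigenbasis (b := hAt.eigenvectorBasis)
      (fun i => Matrix.toEuclideanLin_toLp_eq_smul (hAt.mulVec_eigenvectorBasis i))
      fun i => hμt.2 ⟨i, rfl⟩)
    (hunit v hv) (hunit vt hvt)
    (Matrix.toEuclideanLin_toLp_eq_smul (hlast ▸ hev)) (Matrix.toEuclideanLin_toLp_eq_smul hevt)
  have hinner : ⟪WithLp.toLp 2 v, WithLp.toLp 2 vt⟫ = ∑ i, v i * vt i :=
    Finset.sum_congr rfl fun i _ => by simp [mul_comm]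
  have hnorm : opNorm (A - At) = ‖LinearMap.toContinuousLinearMap
      (Matrix.toEuclideanLin A - Matrix.toEuclideanLin At)‖ := by rw [opNorm, map_sub]
  rw [← hlast, hinner, ← hnorm] at hbound
  have hε : 0 ≤ opNorm (A - At) := norm_nonneg _
  rw [le_div_iff₀ (sub_pos.mpr hgap), mul_comm]
  exact hbound.trans (by linarith)
end

section
/- Let X, Y ∈ ℝ^{n×d} with rows xᵢᵀ, yᵢᵀ, and suppose the column sums of X and of Y are both zero (Xᵀu = 0 and Yᵀu = 0 where u is the all-ones vector). Let R̃ = XYᵀ + YXᵀ. Then the entrywise ℓ¹-norm satisfies ‖R̃‖₁ ≤ 5 ∑_{i,j=1}^{n} |⟨xᵢ − xⱼ, yᵢ − yⱼ⟩|. -/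
open Matrix
/-- Proposition 6.3: for centered X, Y, ‖XYᵀ + YXᵀ‖₁ ≤ 5 ∑_{i,j} |⟨xᵢ−xⱼ, yᵢ−yⱼ⟩|. -/
theorem l1_norm_le_five_rigidity {n d : ℕ}
    (X Y : Matrix (Fin n) (Fin d) ℝ)
    (hX : ∀ l, ∑ i, X i l = 0) (hY : ∀ l, ∑ i, Y i l = 0) :
    ∑ i, ∑ j, |(X * Yᵀ + Y * Xᵀ) i j|
      ≤ 5 * ∑ i, ∑ j, |∑ l, (X i l - X j l) * (Y i l - Y j l)| := by
  rcases Nat.eq_zero_or_pos n with hn | hn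
  · subst hn; simp
  have hnR : (1:ℝ) ≤ (n:ℝ) := by exact_mod_cast hn
  set t : Fin n → ℝ := fun i => ∑ l, X i l * Y i l with ht
  set s : Fin n → Fin n → ℝ := fun i j => ∑ l, (X i l * Y j l + Y i l * X j l) with hs
  set r : Fin n → Fin n → ℝ := fun i j => t i + t j - s i j with hr
  have hentry : ∀ i j, (X * Yᵀ + Y * Xᵀ) i j = s i j := by
    intro i j
    simp [Matrix.mul_apply, Matrix.add_apply, hs, Finset.sum_add_distrib]
  have hrig : ∀ i j, ∑ l, (X i l - X j l) * (Y i l - Y j l) = r i j := by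
    intro i j
    have : r i j = ∑ l, (X i l * Y i l + X j l * Y j l - (X i l * Y j l + Y i l * X j l)) := by
      simp [hr, hs, ht, Finset.sum_add_distrib, Finset.sum_sub_distrib]
    rw [this]
    apply Finset.sum_congr rfl
    intros; ring
  have hs0 : ∀ i, ∑ j, s i j = 0 := by
    intro i
    simp only [hs]
    rw [Finset.sum_comm]
    have : ∀ l ∈ Finset.univ, ∑ j, (X i l * Y j l + Y i l * X j l) = 0 := by
      intro l _
      rw [Finset.sum_add_distrib, ← Finset.mul_sum, ← Finset.mul_sum, hY l, hX l]
      ring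
    rw [Finset.sum_congr rfl this]
    simp
  set T : ℝ := ∑ i, t i with hT
  have hrow : ∀ i, ∑ j, r i j = (n:ℝ) * t i + T := by
    intro i
    simp only [hr]
    rw [Finset.sum_sub_distrib, Finset.sum_add_distrib, hs0 i, Finset.sum_const,
      Finset.card_fin]
    simp [hT, nsmul_eq_mul]
  have hall : ∑ i, ∑ j, r i j = 2 * (n:ℝ) * T := by
    rw [Finset.sum_congr rfl (fun i _ => hrow i), Finset.sum_add_distrib,
      ← Finset.mul_sum, Finset.sum_const, Finset.card_fin, nsmul_eq_mul, ← hT]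
    ring
  set R : ℝ := ∑ i, ∑ j, |r i j| with hR
  have hRnn : 0 ≤ R := by
    apply Finset.sum_nonneg; intro i _; apply Finset.sum_nonneg; intro j _; positivity
  have habsall : 2 * (n:ℝ) * |T| ≤ R := by
    calc 2 * (n:ℝ) * |T| = |∑ i, ∑ j, r i j| := by
          rw [hall, abs_mul, abs_of_nonneg (by positivity : (0:ℝ) ≤ 2 * (n:ℝ))]
      _ ≤ ∑ i, |∑ j, r i j| := Finset.abs_sum_le_sum_abs _ _
      _ ≤ R := Finset.sum_le_sum fun i _ => Finset.abs_sum_le_sum_abs _ _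
  have hti : ∀ i, (n:ℝ) * |t i| ≤ (∑ j, |r i j|) + |T| := by
    intro i
    have h1 : (n:ℝ) * t i = (∑ j, r i j) - T := by rw [hrow i]; ring
    calc (n:ℝ) * |t i| = |(n:ℝ) * t i| := by
          rw [abs_mul, abs_of_nonneg (by positivity : (0:ℝ) ≤ (n:ℝ))]
      _ = |(∑ j, r i j) - T| := by rw [h1]
      _ ≤ |∑ j, r i j| + |T| := abs_sub _ _
      _ ≤ (∑ j, |r i j|) + |T| := by
          gcongr; exact Finset.abs_sum_le_sum_abs _ _
  have hsumt : (n:ℝ) * ∑ i, |t i| ≤ R + (n:ℝ) * |T| := by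
    rw [Finset.mul_sum]
    calc ∑ i, (n:ℝ) * |t i| ≤ ∑ i, ((∑ j, |r i j|) + |T|) :=
          Finset.sum_le_sum fun i _ => hti i
      _ = R + (n:ℝ) * |T| := by
          rw [Finset.sum_add_distrib, Finset.sum_const, Finset.card_fin, nsmul_eq_mul, hR]
  have hmain : ∑ i, ∑ j, |s i j| ≤ 2 * ((n:ℝ) * ∑ i, |t i|) + R := by
    have h1 : ∀ i j, |s i j| ≤ |t i| + |t j| + |r i j| := by
      intro i j
      have : s i j = t i + t j - r i j := by simp [hr]
      rw [this]
      calc |t i + t j - r i j| ≤ |t i + t j| + |r i j| := abs_sub _ _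
        _ ≤ |t i| + |t j| + |r i j| := by gcongr; exact abs_add_le _ _
    calc ∑ i, ∑ j, |s i j| ≤ ∑ i, ∑ j, (|t i| + |t j| + |r i j|) := by
          apply Finset.sum_le_sum; intro i _; apply Finset.sum_le_sum; intro j _; exact h1 i j
      _ = 2 * ((n:ℝ) * ∑ i, |t i|) + R := by
          simp only [Finset.sum_add_distrib, Finset.sum_const, Finset.card_fin,
            nsmul_eq_mul, hR, ← Finset.mul_sum]
          ring
  have hrw : ∑ i, ∑ j, |(X * Yᵀ + Y * Xᵀ) i j| = ∑ i, ∑ j, |s i j| := by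
    apply Finset.sum_congr rfl; intro i _; apply Finset.sum_congr rfl; intro j _
    rw [hentry]
  have hrw2 : ∑ i, ∑ j, |∑ l, (X i l - X j l) * (Y i l - Y j l)| = R := by
    apply Finset.sum_congr rfl; intro i _; apply Finset.sum_congr rfl; intro j _
    rw [hrig]
  rw [hrw, hrw2]
  nlinarith [hmain, hsumt, habsall, hRnn, hnR]
end

section
/- Let t be uniformly distributed on [−1/2, 1/2] and R ≥ 1. Then 𝔼[R² sin²(t/R)] − 𝔼[R²(1 − cos(t/R))²] = R³(−1/R − sin(1/R) + 4 sin(1/(2R))) and this quantity is at least 0.07. -/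
/-!
With u = t/R the integrand difference is R²(2 cos u − 1 − cos 2u), whose integral is elementary.
For the bound put s = 1/R ∈ (0, 1]: the Taylor estimates sin s ≤ s − s³/6 + s⁵/100 and
sin (s/2) ≥ s/2 − s³/48 give −s − sin s + 4 sin (s/2) ≥ s³/12 − s⁵/100, so the quantity is at
least 1/12 − s²/100 ≥ 1/12 − 1/100 > 0.07.
-/

open MeasureTheory Real

lemma sin_sq_sub_one_sub_cos_sq (x : ℝ) :
    sin x ^ 2 - (1 - cos x) ^ 2 = 2 * cos x - 1 - cos (2 * x) := by
  rw [cos_two_mul]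
  linear_combination sin_sq_add_cos_sq x

lemma integral_cos_div_symm (a c : ℝ) (hc : c ≠ 0) :
    ∫ t in -a..a, cos (t / c) = 2 * c * sin (a / c) := by
  rw [intervalIntegral.integral_comp_div cos hc, integral_cos, neg_div, sin_neg, smul_eq_mul]
  ring

lemma integral_sin_sq_sub_one_sub_cos_sq (a c : ℝ) (hc : c ≠ 0) :
    ∫ t in -a..a, (sin (t / c) ^ 2 - (1 - cos (t / c)) ^ 2)
      = 4 * c * sin (a / c) - 2 * a - c * sin (2 * a / c) := by
  have hc2 : c / 2 ≠ 0 := by positivity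
  have hintegrand : ∀ t, sin (t / c) ^ 2 - (1 - cos (t / c)) ^ 2
      = 2 * cos (t / c) - 1 - cos (t / (c / 2)) := fun t => by
    rw [sin_sq_sub_one_sub_cos_sq, div_div_eq_mul_div, mul_div_assoc', mul_comm t]
  simp_rw [hintegrand]
  rw [intervalIntegral.integral_sub, intervalIntegral.integral_sub,
    intervalIntegral.integral_const_mul, integral_cos_div_symm a c hc,
    integral_cos_div_symm a _ hc2, intervalIntegral.integral_const,
    div_div_eq_mul_div, mul_comm a 2, smul_eq_mul]
  · ring
  all_goals exact Continuous.intervalIntegrable (by fun_prop) _ _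

lemma neg_sub_sin_add_four_sin_half_ge {s : ℝ} (hs0 : 0 ≤ s) (hs1 : s ≤ 1) :
    s ^ 3 / 12 - s ^ 5 / 100 ≤ -s - sin s + 4 * sin (s / 2) := by
  have hsin : sin s ≤ s - s ^ 3 / 6 + s ^ 5 / 100 := by
    have := (abs_le.mp (sin_bound (x := s) (by rwa [abs_of_nonneg hs0]))).2
    rw [abs_of_nonneg hs0] at this
    linarith
  have hsin_half := sin_ge_sub_cube (x := s / 2) (by positivity)
  linarith

lemma pow_three_mul_four_sin_half_sub_sin_ge {R : ℝ} (hR : 1 ≤ R) :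
    (0.07 : ℝ) ≤ R ^ 3 * (-(1 / R) - sin (1 / R) + 4 * sin (1 / (2 * R))) := by
  have hR0 : 0 < R := by linarith
  set s := 1 / R with hs
  have hs0 : 0 ≤ s := by positivity
  have hs1 : s ≤ 1 := div_le_one_of_le₀ hR hR0.le
  have hRs : R * s = 1 := by rw [hs]; field_simp
  rw [show 1 / (2 * R) = s / 2 by rw [hs]; ring]
  calc (0.07 : ℝ) ≤ 1 / 12 - s ^ 2 / 100 := by nlinarith
    _ = R ^ 3 * (s ^ 3 / 12 - s ^ 5 / 100) := by
      linear_combination (s ^ 2 / 100 - 1 / 12) * ((R * s) ^ 2 + R * s + 1) * hRs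
    _ ≤ R ^ 3 * (-s - sin s + 4 * sin (s / 2)) := by
      gcongr
      exact neg_sub_sin_add_four_sin_half_ge hs0 hs1

/-- For t uniform on [−1/2,1/2] and R ≥ 1,
𝔼[R² sin²(t/R)] − 𝔼[R²(1 − cos(t/R))²] = R³(−1/R − sin(1/R) + 4 sin(1/(2R))) ≥ 0.07. -/
theorem eigenvalue_gap_bending (R : ℝ) (hR : 1 ≤ R) :
    (∫ t in Set.Icc (-(1 : ℝ) / 2) (1 / 2), R ^ 2 * Real.sin (t / R) ^ 2)
        - (∫ t in Set.Icc (-(1 : ℝ) / 2) (1 / 2), R ^ 2 * (1 - Real.cos (t / R)) ^ 2)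
      = R ^ 3 * (-(1 / R) - Real.sin (1 / R) + 4 * Real.sin (1 / (2 * R)))
    ∧ (0.07 : ℝ) ≤ R ^ 3 * (-(1 / R) - Real.sin (1 / R) + 4 * Real.sin (1 / (2 * R))) := by
  refine ⟨?_, pow_three_mul_four_sin_half_sub_sin_ge hR⟩
  have hR0 : R ≠ 0 := by positivity
  rw [← integral_sub (Continuous.integrableOn_Icc (by fun_prop))
      (Continuous.integrableOn_Icc (by fun_prop)), integral_Icc_eq_integral_Ioc,
    ← intervalIntegral.integral_of_le (by norm_num), neg_div]
  simp_rw [← mul_sub]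
  rw [intervalIntegral.integral_const_mul, integral_sin_sq_sub_one_sub_cos_sq _ _ hR0,
    div_div, mul_one_div_cancel two_ne_zero]
  field_simp
  ring
end

section
/- Suppose paths γ_{ij} are assigned to edges (i,j) ∈ E of a graph G, where each γ_{ij} is a path in another graph G̃ = (V, Ẽ) from i to j. Then for any vector v ∈ ℝⁿ, ∑_{(i,j)∈E} (vᵢ − vⱼ)² ≤ γ_* ∑_{e∈Ẽ} v(e)² b(e), where γ_* = max_{(i,j)∈E} |γ_{ij}| is the maximum path length, v(e) = v_a − v_b for edge e = (a,b), and b(e) is the number of paths containing edge e. -/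
lemma list_sq_sum_le (l : List ℝ) : l.sum ^ 2 ≤ l.length * (l.map (fun x => x ^ 2)).sum := by
  induction l with
  | nil => simp
  | cons a t ih =>
    have hQ : (0:ℝ) ≤ (t.map (fun x => x ^ 2)).sum :=
      List.sum_nonneg (by simp; intro x _; positivity)
    simp only [List.sum_cons, List.map_cons, List.length_cons]
    push_cast
    rcases Nat.eq_zero_or_pos t.length with h0 | hpos
    · have : t = [] := List.length_eq_zero_iff.mp h0
      subst this; simp
    · have hn : (1:ℝ) ≤ (t.length : ℝ) := by exact_mod_cast hpos
      nlinarith [sq_nonneg ((t.length : ℝ) * a - t.sum),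
        mul_le_mul_of_nonneg_left ih (by linarith : (0:ℝ) ≤ (t.length:ℝ)),
        mul_nonneg (by linarith : (0:ℝ) ≤ (t.length:ℝ)) hQ,
        mul_le_mul_of_nonneg_left ih (by linarith : (0:ℝ) ≤ (t.length:ℝ) - 1)]

lemma telescope_walk {n : ℕ} {Gt : SimpleGraph (Fin n)} (v : Fin n → ℝ) :
    ∀ {a b : Fin n} (w : Gt.Walk a b),
      (w.darts.map (fun d => v d.fst - v d.snd)).sum = v a - v b := by
  intro a b w
  induction w with
  | nil => simp
  | cons h w ih => simp [ih]

/-- Canonical paths comparison: if to each pair (i,j) ∈ E a path γ_{ij} in G̃ from i to j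
is assigned, then ∑_{(i,j)∈E}(vᵢ−vⱼ)² ≤ γ_* ∑_{e∈Ẽ} v(e)² b(e), where γ_* bounds the
path lengths and b(e) is the number of paths through edge e. -/
theorem canonical_paths_comparison {n : ℕ} (Gt : SimpleGraph (Fin n))
    [DecidableRel Gt.Adj]
    (E : Finset (Fin n × Fin n))
    (γ : (p : Fin n × Fin n) → Gt.Walk p.1 p.2)
    (hpath : ∀ p ∈ E, (γ p).IsPath)
    (γstar : ℕ) (hlen : ∀ p ∈ E, (γ p).length ≤ γstar)
    (v : Fin n → ℝ) :
    ∑ p ∈ E, (v p.1 - v p.2) ^ 2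
      ≤ γstar * ∑ e ∈ Gt.edgeFinset,
          (Sym2.lift ⟨fun a b => (v a - v b) ^ 2, by intros; ring⟩ e)
            * ((E.filter fun p => e ∈ (γ p).edges).card : ℝ) := by
  classical
  set f : Sym2 (Fin n) → ℝ := Sym2.lift ⟨fun a b => (v a - v b) ^ 2, by intros; ring⟩ with hf
  have hfnonneg : ∀ e, 0 ≤ f e := by
    intro e
    induction e using Sym2.ind with
    | _ a b => rw [hf]; simp only [Sym2.lift_mk]; positivity
  -- pointwise bound via telescoping + Cauchy–Schwarz
  have key : ∀ p ∈ E, (v p.1 - v p.2) ^ 2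
      ≤ (γstar : ℝ) * ∑ e ∈ ((γ p).edges).toFinset, f e := by
    intro p hp
    have h1 := telescope_walk v (γ p)
    have h2 := list_sq_sum_le ((γ p).darts.map (fun d => v d.fst - v d.snd))
    rw [h1] at h2
    have h3 : (((γ p).darts.map (fun d => v d.fst - v d.snd)).map (fun x => x ^ 2)).sum
        = (((γ p).edges).map f).sum := by
      rw [SimpleGraph.Walk.edges, List.map_map, List.map_map]
      congr 1
    have h4 : (((γ p).edges).map f).sum = ∑ e ∈ ((γ p).edges).toFinset, f e :=
      (List.sum_toFinset f (hpath p hp).edges_nodup).symm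
    have h5 : ((((γ p).darts.map (fun d => v d.fst - v d.snd)).length : ℝ)) ≤ (γstar : ℝ) := by
      rw [List.length_map, SimpleGraph.Walk.length_darts]
      exact_mod_cast hlen p hp
    calc (v p.1 - v p.2) ^ 2
        ≤ (((γ p).darts.map (fun d => v d.fst - v d.snd)).length : ℝ)
            * ∑ e ∈ ((γ p).edges).toFinset, f e := by rw [← h4, ← h3]; exact h2
      _ ≤ (γstar : ℝ) * ∑ e ∈ ((γ p).edges).toFinset, f e := by
          apply mul_le_mul_of_nonneg_right h5
          exact Finset.sum_nonneg fun e _ => hfnonneg e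
  -- sum over p and exchange sums
  have hsub : ∀ p, ((γ p).edges).toFinset ⊆ Gt.edgeFinset := by
    intro p e he
    rw [SimpleGraph.mem_edgeFinset]
    exact (γ p).edges_subset_edgeSet (List.mem_toFinset.mp he)
  calc ∑ p ∈ E, (v p.1 - v p.2) ^ 2
      ≤ ∑ p ∈ E, (γstar : ℝ) * ∑ e ∈ ((γ p).edges).toFinset, f e :=
        Finset.sum_le_sum key
    _ = (γstar : ℝ) * ∑ p ∈ E, ∑ e ∈ ((γ p).edges).toFinset, f e := by
        rw [Finset.mul_sum]
    _ = (γstar : ℝ) * ∑ p ∈ E, ∑ e ∈ Gt.edgeFinset,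
          (if e ∈ (γ p).edges then f e else 0) := by
        congr 1
        apply Finset.sum_congr rfl
        intro p _
        have : ∀ e, (if e ∈ (γ p).edges then f e else 0)
            = (if e ∈ ((γ p).edges).toFinset then f e else 0) := by
          intro e; simp
        simp only [this]
        rw [Finset.sum_ite_mem, Finset.inter_eq_right.mpr (hsub p)]
    _ = (γstar : ℝ) * ∑ e ∈ Gt.edgeFinset,
          f e * ((E.filter fun p => e ∈ (γ p).edges).card : ℝ) := by
        congr 1
        rw [Finset.sum_comm]
        apply Finset.sum_congr rfl
        intro e _
        rw [← Finset.sum_filter, Finset.sum_const, nsmul_eq_mul, mul_comm]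
end

section
/- Let C₁, …, C_n be finite subsets of {1, …, n} with maxₖ |Cₖ| ≤ A, and suppose for every edge (i,j) ∈ Ẽ of a graph G̃ we have |{k : i ∈ Cₖ and j ∈ Cₖ}| ≥ B. Then ∑_{k=1}^n P^⊥_{u_{Cₖ}} ⪰ (B/A) 𝓛̃, where P^⊥_{u_{Cₖ}} is the n×n matrix (padded with zeros outside Cₖ×Cₖ) of the projection orthogonal to the all-ones vector on coordinates Cₖ, and 𝓛̃ is the Laplacian of G̃. -/
/-!
On the coordinates of `s`, the projection orthogonal to the all-ones vector has quadratic form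
`(1 / (2 |s|)) ∑_{i,j ∈ s} (x i - x j) ^ 2`, i.e. it is `1 / |s|` times the Laplacian of the
complete graph on `s`. An oriented edge set inside `s` meets each unordered pair at most once, so
this dominates `1 / |s|` times its Laplacian. Summing over the cliques, every edge `(i, j)` picks
up the weight `∑_{k : i, j ∈ Cₖ} 1 / |Cₖ| ≥ B / A`.
-/

open Matrix Finset

section OrientedPairs

variable {α M : Type*} [DecidableEq α] [AddCommMonoid M] [PartialOrder M] [IsOrderedAddMonoid M]

theorem Finset.two_nsmul_sum_le_sum_product {E : Finset (α × α)} {s : Finset α} {f : α × α → M}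
    (hf : ∀ p ∈ s ×ˢ s, 0 ≤ f p) (hswap : ∀ p ∈ E, f p.swap = f p)
    (hE : ∀ p ∈ E, p.swap ∉ E) (hEs : E ⊆ s ×ˢ s) :
    2 • ∑ p ∈ E, f p ≤ ∑ p ∈ s ×ˢ s, f p := by
  have hdisj : Disjoint E (E.image Prod.swap) := by
    rw [disjoint_left]
    rintro q hq hq'
    obtain ⟨r, hr, rfl⟩ := mem_image.mp hq'
    exact hE r hr hq
  have hsub : E ∪ E.image Prod.swap ⊆ s ×ˢ s := by
    refine union_subset hEs fun q hq => ?_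
    obtain ⟨r, hr, rfl⟩ := mem_image.mp hq
    exact mem_product.mpr (mem_product.mp (hEs hr)).symm
  calc 2 • ∑ p ∈ E, f p = ∑ p ∈ E ∪ E.image Prod.swap, f p := by
        rw [sum_union hdisj, sum_image fun p _ q _ h => Prod.swap_injective h,
          sum_congr rfl hswap, two_nsmul]
    _ ≤ ∑ p ∈ s ×ˢ s, f p := sum_le_sum_of_subset_of_nonneg hsub fun p hp _ => hf p hp

end OrientedPairs

theorem Finset.sum_sum_sub_sq {α R : Type*} [CommRing R] (s : Finset α) (x : α → R) :
    ∑ i ∈ s, ∑ j ∈ s, (x i - x j) ^ 2 = 2 * (#s * ∑ i ∈ s, x i ^ 2 - (∑ i ∈ s, x i) ^ 2) := by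
  simp only [sub_sq, sum_add_distrib, sum_sub_distrib, sum_const, ← mul_sum, ← sum_mul,
    nsmul_eq_mul]
  ring

theorem div_le_sum_one_div {ι : Type*} {K : Finset ι} {a : ι → ℝ} {A B : ℝ} (hA : 0 < A)
    (ha : ∀ k ∈ K, 0 < a k) (haA : ∀ k ∈ K, a k ≤ A) (hB : B ≤ #K) :
    B / A ≤ ∑ k ∈ K, 1 / a k :=
  calc B / A ≤ #K / A := by gcongr
    _ = ∑ _k ∈ K, 1 / A := by rw [sum_const, nsmul_eq_mul, mul_one_div]
    _ ≤ ∑ k ∈ K, 1 / a k := sum_le_sum fun k hk => one_div_le_one_div_of_le (ha k hk) (haA k hk)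

namespace Matrix

variable {ι : Type*} [Fintype ι] [DecidableEq ι]

/-- The paper's `P^⊥_{u_s}`, padded by zeros outside `s × s`. -/
noncomputable def projOrthOnes (s : Finset ι) : Matrix ι ι ℝ :=
  of fun i j => if i ∈ s ∧ j ∈ s then (if i = j then 1 else 0) - 1 / #s else 0

noncomputable def edgeLaplacian (p : ι × ι) : Matrix ι ι ℝ :=
  vecMulVec (Pi.single p.1 1 - Pi.single p.2 1) (Pi.single p.1 1 - Pi.single p.2 1)

theorem dotProduct_edgeLaplacian_mulVec (p : ι × ι) (x : ι → ℝ) :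
    x ⬝ᵥ (edgeLaplacian p *ᵥ x) = (x p.1 - x p.2) ^ 2 := by
  simp [edgeLaplacian, vecMulVec_mulVec, sub_dotProduct, dotProduct_sub, single_dotProduct,
    dotProduct_single, sq]

theorem projOrthOnes_mulVec_apply (s : Finset ι) (x : ι → ℝ) (i : ι) :
    (projOrthOnes s *ᵥ x) i = if i ∈ s then x i - (∑ j ∈ s, x j) / #s else 0 := by
  split_ifs with hi
  · simp [projOrthOnes, mulVec, dotProduct, hi, sub_mul, sum_sub_distrib, ite_and,
      div_eq_inv_mul, mul_sum]
  · simp [projOrthOnes, mulVec, dotProduct, hi]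

theorem dotProduct_projOrthOnes_mulVec (s : Finset ι) (x : ι → ℝ) :
    x ⬝ᵥ (projOrthOnes s *ᵥ x) = (∑ i ∈ s, ∑ j ∈ s, (x i - x j) ^ 2) / (2 * #s) := by
  rcases s.eq_empty_or_nonempty with rfl | hs
  · simp [dotProduct, projOrthOnes_mulVec_apply]
  have hcard : (#s : ℝ) ≠ 0 := by exact_mod_cast hs.card_pos.ne'
  simp only [dotProduct, projOrthOnes_mulVec_apply, mul_ite, mul_zero, sum_ite_mem, univ_inter,
    mul_sub, sum_sub_distrib, ← sum_mul, sum_sum_sub_sq]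
  field_simp

theorem sum_sq_sub_div_card_le_dotProduct_projOrthOnes_mulVec {s : Finset ι}
    {E : Finset (ι × ι)} (hE : ∀ p ∈ E, p.swap ∉ E) (hEs : E ⊆ s ×ˢ s) (x : ι → ℝ) :
    (∑ p ∈ E, (x p.1 - x p.2) ^ 2) / #s ≤ x ⬝ᵥ (projOrthOnes s *ᵥ x) := by
  have h := two_nsmul_sum_le_sum_product (f := fun p => (x p.1 - x p.2) ^ 2)
    (fun _ _ => sq_nonneg _) (fun p _ => by simp only [Prod.fst_swap, Prod.snd_swap]; ring) hE hEs
  rw [dotProduct_projOrthOnes_mulVec, ← sum_product' s s fun i j => (x i - x j) ^ 2,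
    div_mul_eq_div_div]
  rw [nsmul_eq_mul, Nat.cast_two] at h
  gcongr
  linarith

end Matrix

theorem sum_clique_projections_dominates_laplacian_general {n : ℕ}
    (C : Fin n → Finset (Fin n)) (A B : ℝ) (hA : 0 < A)
    (hcard : ∀ k, ((C k).card : ℝ) ≤ A)
    (Et : Finset (Fin n × Fin n))
    (horient : ∀ p ∈ Et, (p.2, p.1) ∉ Et)
    (hB : ∀ p ∈ Et,
      B ≤ ((Finset.univ.filter fun k => p.1 ∈ C k ∧ p.2 ∈ C k).card : ℝ)) :
    Matrix.PosSemidef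
      ((∑ k, Matrix.of fun i j =>
          if i ∈ C k ∧ j ∈ C k then
            (if i = j then (1 : ℝ) else 0) - 1 / (C k).card
          else 0)
        - (B / A) • ∑ p ∈ Et, Matrix.vecMulVec
            (Pi.single p.1 1 - Pi.single p.2 1)
            (Pi.single p.1 1 - Pi.single p.2 1)) := by
  rw [posSemidef_iff_dotProduct_mulVec]
  refine ⟨isHermitian_iff_isSymm.mpr (IsSymm.ext fun i j => ?_), fun x => ?_⟩
  · simp [Matrix.sum_apply, vecMulVec_apply, and_comm, eq_comm, mul_comm]
  change 0 ≤ x ⬝ᵥ ((∑ k, projOrthOnes (C k) - (B / A) • ∑ p ∈ Et, edgeLaplacian p) *ᵥ x)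
  simp only [sub_mulVec, sum_mulVec, smul_mulVec, dotProduct_sub, dotProduct_sum,
    dotProduct_smul, dotProduct_edgeLaplacian_mulVec, smul_eq_mul, sub_nonneg, mul_sum]
  calc ∑ p ∈ Et, B / A * (x p.1 - x p.2) ^ 2
      ≤ ∑ p ∈ Et, (∑ k with p.1 ∈ C k ∧ p.2 ∈ C k, 1 / ((C k).card : ℝ)) * (x p.1 - x p.2) ^ 2 :=
        sum_le_sum fun p hp => by
          gcongr
          refine div_le_sum_one_div hA (fun k hk => ?_) (fun k _ => hcard k) (hB p hp)
          exact_mod_cast card_pos.mpr ⟨p.1, (mem_filter.mp hk).2.1⟩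
    _ = ∑ k, (∑ p ∈ Et with p.1 ∈ C k ∧ p.2 ∈ C k, (x p.1 - x p.2) ^ 2) / (C k).card := by
        simp only [sum_filter, sum_mul, sum_div, ite_mul, ite_div, zero_mul, zero_div,
          one_div_mul_eq_div]
        exact sum_comm
    _ ≤ ∑ k, x ⬝ᵥ (projOrthOnes (C k) *ᵥ x) :=
        sum_le_sum fun k _ => by
          refine sum_sq_sub_div_card_le_dotProduct_projOrthOnes_mulVec (fun p hp h => ?_)
            (fun p hp => ?_) x
          · exact horient p (mem_filter.mp hp).1 (mem_filter.mp h).1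
          · exact mem_product.mpr (mem_filter.mp hp).2

/-- Claim C (Laplacian comparison): if |Cₖ| ≤ A for all k and every edge (i,j) of G̃
has at least B cliques Cₖ containing both endpoints, then
∑ₖ P^⊥_{u_{Cₖ}} ⪰ (B/A) 𝓛̃. -/
theorem sum_clique_projections_dominates_laplacian {n : ℕ}
    (C : Fin n → Finset (Fin n)) (A B : ℝ) (hA : 0 < A)
    (hcard : ∀ k, ((C k).card : ℝ) ≤ A)
    (Et : Finset (Fin n × Fin n))
    (hloop : ∀ p ∈ Et, p.1 ≠ p.2)
    (horient : ∀ p ∈ Et, (p.2, p.1) ∉ Et)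
    (hB : ∀ p ∈ Et,
      B ≤ ((Finset.univ.filter fun k => p.1 ∈ C k ∧ p.2 ∈ C k).card : ℝ)) :
    Matrix.PosSemidef
      ((∑ k, Matrix.of fun i j =>
          if i ∈ C k ∧ j ∈ C k then
            (if i = j then (1 : ℝ) else 0) - 1 / (C k).card
          else 0)
        - (B / A) • ∑ p ∈ Et, Matrix.vecMulVec
            (Pi.single p.1 1 - Pi.single p.2 1)
            (Pi.single p.1 1 - Pi.single p.2 1)) :=
  sum_clique_projections_dominates_laplacian_general C A B hA hcard Et horient hB
end

section
/- Let A_G̃ ∈ ℝ^{n×n} be the adjacency matrix of a graph G̃ and let B ∈ ℝ^{(m+1)×(m+1)} be the all-ones matrix. Let G* be the graph with adjacency matrix A_{G*} = A_G̃ ⊗ B (Kronecker product). Then the maximum degree of G* equals (m+1) times the maximum degree of G̃, and the second smallest eigenvalue of the normalized Laplacian of G* satisfies σ_min(I − D_{G*}^{−1/2} A_{G*} D_{G*}^{−1/2}) ≥ min{σ_min(I − D_G̃^{−1/2} A_G̃ D_G̃^{−1/2}), 1}, where σ_min denotes the smallest nonzero eigenvalue. -/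
/-!
Write `J` for the all-ones `κ × κ` matrix and `c = |κ|`. The row sums of `A ⊗ₖ J` are `c` times
those of `A`, so the normalized adjacency matrix of `A ⊗ₖ J` is `N ⊗ₖ (c⁻¹ J)`, with `N` that
of `A`. An eigenvector of `N ⊗ₖ (c⁻¹ J)` for an eigenvalue `μ ≠ 0` is constant on each block
`{i} × κ`, and its block averages form an eigenvector of `N` for `μ`. So every eigenvalue
`1 - μ ∉ {0, 1}` of the normalized Laplacian of `A ⊗ₖ J` is one of the normalized Laplacian
of `A`.
-/

open Matrix Kronecker

theorem spectrum.mem_one_sub_iff {R A : Type*} [CommRing R] [Ring A] [Algebra R A]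
    {a : A} {r : R} : r ∈ spectrum R (1 - a) ↔ 1 - r ∈ spectrum R a := by
  rw [← map_one (algebraMap R A), ← spectrum.singleton_sub_eq, Set.singleton_sub]
  constructor
  · rintro ⟨s, hs, rfl⟩
    rwa [sub_sub_cancel]
  · exact fun h => ⟨1 - r, h, sub_sub_cancel 1 r⟩

namespace Matrix

variable {ι κ : Type*} [Fintype ι] [Fintype κ]

theorem mem_spectrum_iff_exists_mulVec_eq_smul {K : Type*} [Field K] [DecidableEq ι]
    {M : Matrix ι ι K} {μ : K} : μ ∈ spectrum K M ↔ ∃ v ≠ 0, M *ᵥ v = μ • v := by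
  rw [← spectrum_toLin', ← Module.End.hasEigenvalue_iff_mem_spectrum]
  constructor
  · intro h
    obtain ⟨v, hv⟩ := h.exists_hasEigenvector
    exact ⟨v, hv.2, by simpa using hv.apply_eq_smul⟩
  · rintro ⟨v, hv0, hv⟩
    exact Module.End.hasEigenvalue_of_hasEigenvector
      ⟨Module.End.mem_eigenspace_iff.2 (by simpa using hv), hv0⟩

theorem row_sum_kronecker_ones {R : Type*} [Semiring R] (A : Matrix ι ι R) (p : ι × κ) :
    ∑ q, (A ⊗ₖ of fun _ _ : κ => (1 : R)) p q = Fintype.card κ * ∑ j, A p.1 j := by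
  simp [Fintype.sum_prod_type, Finset.mul_sum]

theorem iSup_row_sum_kronecker_ones [Nonempty κ] (A : Matrix ι ι ℝ) :
    ⨆ p : ι × κ, ∑ q, (A ⊗ₖ of fun _ _ : κ => (1 : ℝ)) p q
      = Fintype.card κ * ⨆ i, ∑ j, A i j := by
  simp only [row_sum_kronecker_ones, Real.mul_iSup_of_nonneg (Nat.cast_nonneg _)]
  exact congrArg sSup (Prod.fst_surjective.range_comp fun i => _ * ∑ j, A i j)

noncomputable def normalizedAdjacency [DecidableEq ι] (A : Matrix ι ι ℝ) : Matrix ι ι ℝ :=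
  diagonal (fun i => 1 / Real.sqrt (∑ j, A i j)) * A *
    diagonal (fun i => 1 / Real.sqrt (∑ j, A i j))

theorem normalizedAdjacency_kronecker_ones [DecidableEq ι] [DecidableEq κ]
    (A : Matrix ι ι ℝ) :
    normalizedAdjacency (A ⊗ₖ of fun _ _ : κ => (1 : ℝ))
      = normalizedAdjacency A ⊗ₖ of fun _ _ : κ => (Fintype.card κ : ℝ)⁻¹ := by
  set c : ℝ := (Fintype.card κ : ℝ)
  have hc : (Real.sqrt c)⁻¹ * (Real.sqrt c)⁻¹ = c⁻¹ := by
    rw [← mul_inv, Real.mul_self_sqrt (Nat.cast_nonneg _)]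
  ext p q
  simp only [normalizedAdjacency, diagonal_mul, mul_diagonal, row_sum_kronecker_ones]
  simp only [kroneckerMap_apply, of_apply, diagonal_mul, mul_diagonal,
    Real.sqrt_mul (Nat.cast_nonneg _), one_div, mul_inv, mul_one]
  linear_combination (Real.sqrt (∑ j, A p.1 j))⁻¹ * A p.1 q.1 *
    (Real.sqrt (∑ j, A q.1 j))⁻¹ * hc

theorem mem_spectrum_of_mem_spectrum_kronecker_inv_card {K : Type*} [Field K] [CharZero K]
    [DecidableEq ι] [DecidableEq κ] {M : Matrix ι ι K} {μ : K}
    (hμ : μ ∈ spectrum K (M ⊗ₖ of fun _ _ : κ => (Fintype.card κ : K)⁻¹))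
    (hμ0 : μ ≠ 0) :
    μ ∈ spectrum K M := by
  obtain ⟨v, hv0, hv⟩ := mem_spectrum_iff_exists_mulVec_eq_smul.1 hμ
  obtain ⟨p, -⟩ := Function.ne_iff.1 hv0
  have : Nonempty κ := ⟨p.2⟩
  have hc : (Fintype.card κ : K) ≠ 0 := Nat.cast_ne_zero.2 Fintype.card_ne_zero
  set w : ι → K := fun i => (Fintype.card κ : K)⁻¹ * ∑ b, v (i, b)
  have hblock : ∀ i a, μ * v (i, a) = (M *ᵥ w) i := by
    intro i a
    rw [← smul_eq_mul, ← Pi.smul_apply μ v, ← hv]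
    simp [w, mulVec, dotProduct, Fintype.sum_prod_type, Finset.mul_sum, mul_assoc]
  refine mem_spectrum_iff_exists_mulVec_eq_smul.2 ⟨w, fun hw => hv0 ?_, ?_⟩
  · funext q
    have := hblock q.1 q.2
    rw [hw, mulVec_zero] at this
    simpa [hμ0] using this
  · funext i
    change (M *ᵥ w) i = μ * ((Fintype.card κ : K)⁻¹ * ∑ b, v (i, b))
    rw [mul_left_comm, Finset.mul_sum]
    simp only [hblock, Finset.sum_const, Finset.card_univ, nsmul_eq_mul, inv_mul_cancel_left₀ hc]

end Matrix

theorem kronecker_graph_properties_general {n m : ℕ}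
    (At : Matrix (Fin n) (Fin n) ℝ)
    (Bmat : Matrix (Fin (m + 1)) (Fin (m + 1)) ℝ) (hB : ∀ a b, Bmat a b = 1)
    (σt σstar : ℝ)
    (hσt : IsLeast {x | x ≠ 0 ∧ x ∈ spectrum ℝ
        ((1 : Matrix (Fin n) (Fin n) ℝ) -
          Matrix.diagonal (fun i => 1 / Real.sqrt (∑ j, At i j)) * At *
          Matrix.diagonal (fun i => 1 / Real.sqrt (∑ j, At i j)))} σt)
    (hσstar : IsLeast {x | x ≠ 0 ∧ x ∈ spectrum ℝ
        ((1 : Matrix (Fin n × Fin (m + 1)) (Fin n × Fin (m + 1)) ℝ) -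
          Matrix.diagonal (fun i => 1 / Real.sqrt (∑ j, (At ⊗ₖ Bmat) i j)) *
            (At ⊗ₖ Bmat) *
          Matrix.diagonal (fun i => 1 / Real.sqrt (∑ j, (At ⊗ₖ Bmat) i j)))} σstar) :
    (⨆ i : Fin n × Fin (m + 1), ∑ j, (At ⊗ₖ Bmat) i j)
        = (m + 1) * ⨆ i, ∑ j, At i j
    ∧ min σt 1 ≤ σstar := by
  obtain rfl : Bmat = of fun _ _ => 1 := ext hB
  refine ⟨by simpa using iSup_row_sum_kronecker_ones (κ := Fin (m + 1)) At, ?_⟩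
  by_cases hσstar1 : σstar = 1
  · exact hσstar1 ▸ min_le_right σt 1
  obtain ⟨hσstar0, hmem⟩ := hσstar.1
  refine (min_le_left σt 1).trans (hσt.2 ⟨hσstar0, spectrum.mem_one_sub_iff.2 ?_⟩)
  replace hmem : 1 - σstar ∈ spectrum ℝ (normalizedAdjacency (At ⊗ₖ of fun _ _ => 1)) :=
    spectrum.mem_one_sub_iff.1 hmem
  rw [normalizedAdjacency_kronecker_ones] at hmem
  exact mem_spectrum_of_mem_spectrum_kronecker_inv_card hmem (sub_ne_zero.2 (Ne.symm hσstar1))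

/-- Claim 5.4 (properties of G*): with A* = A_G̃ ⊗ B (B the all-ones (m+1)×(m+1)
matrix), the maximum degree of G* is (m+1) times the maximum degree of G̃, and the
smallest nonzero eigenvalue of the normalized Laplacian of G* is at least
min{smallest nonzero eigenvalue of the normalized Laplacian of G̃, 1}. -/
theorem kronecker_graph_properties {n m : ℕ} (hn : 0 < n)
    (At : Matrix (Fin n) (Fin n) ℝ)
    (hsym : At.IsSymm) (h01 : ∀ i j, At i j = 0 ∨ At i j = 1)
    (hdiag : ∀ i, At i i = 0)
    (hdeg : ∀ i, 0 < ∑ j, At i j)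
    (Bmat : Matrix (Fin (m + 1)) (Fin (m + 1)) ℝ) (hB : ∀ a b, Bmat a b = 1)
    (σt σstar : ℝ)
    (hσt : IsLeast {x | x ≠ 0 ∧ x ∈ spectrum ℝ
        ((1 : Matrix (Fin n) (Fin n) ℝ) -
          Matrix.diagonal (fun i => 1 / Real.sqrt (∑ j, At i j)) * At *
          Matrix.diagonal (fun i => 1 / Real.sqrt (∑ j, At i j)))} σt)
    (hσstar : IsLeast {x | x ≠ 0 ∧ x ∈ spectrum ℝ
        ((1 : Matrix (Fin n × Fin (m + 1)) (Fin n × Fin (m + 1)) ℝ) -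
          Matrix.diagonal (fun i => 1 / Real.sqrt (∑ j, (At ⊗ₖ Bmat) i j)) *
            (At ⊗ₖ Bmat) *
          Matrix.diagonal (fun i => 1 / Real.sqrt (∑ j, (At ⊗ₖ Bmat) i j)))} σstar) :
    (⨆ i : Fin n × Fin (m + 1), ∑ j, (At ⊗ₖ Bmat) i j)
        = (m + 1) * ⨆ i, ∑ j, At i j
    ∧ min σt 1 ≤ σstar :=
  kronecker_graph_properties_general At Bmat hB σt σstar hσt hσstar
end
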